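/- In the ILT model, the number of edges inside the neighbourhood of a node satisfies: e(x, t+1) = 3·e(x,t) + 2·deg_t(x) for a node x of G_t, and e(x', t+1) = e(x,t) + deg_t(x) for its clone x'. -/

import Mathlib

open SimpleGraph Finset

universe u
variable {V : Type u}

/-- One step of the Iterated Local Transitivity model: every vertex `x` gets a
clone `Sum.inr x` joined to `x` and all of its neighbours; old vertices are `Sum.inl`. -/
def ILTstep (G : SimpleGraph V) : SimpleGraph (V ⊕ V) where
  Adj a b := match a, b with
    | Sum.inl x, Sum.inl y => G.Adj x y
    | Sum.inl x, Sum.inr y => x = y ∨ G.Adj x y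
    | Sum.inr x, Sum.inl y => x = y ∨ G.Adj x y
    | Sum.inr _, Sum.inr _ => False
  symm := by
    constructor
    rintro (x | x) (y | y) h
    · exact G.adj_symm h
    · exact h.imp Eq.symm (fun hh => G.adj_symm hh)
    · exact h.imp Eq.symm (fun hh => G.adj_symm hh)
    · exact h.elim
  loopless := by
    constructor
    rintro (x | x) h
    · exact (G.ne_of_adj h) rfl
    · exact h

instance ILTstepDecAdj (G : SimpleGraph V) [DecidableEq V] [DecidableRel G.Adj] :
    DecidableRel (ILTstep G).Adj := fun a b =>
  match a, b with
  | Sum.inl x, Sum.inl y => inferInstanceAs (Decidable (G.Adj x y))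
  | Sum.inl x, Sum.inr y => inferInstanceAs (Decidable (x = y ∨ G.Adj x y))
  | Sum.inr x, Sum.inl y => inferInstanceAs (Decidable (x = y ∨ G.Adj x y))
  | Sum.inr _, Sum.inr _ => inferInstanceAs (Decidable False)

/-- The vertex set of the ILT model at time `t`. -/
def ILTV (V : Type u) : ℕ → Type u
  | 0 => V
  | t + 1 => ILTV V t ⊕ ILTV V t

/-- The graph of the ILT model at time `t`, starting from `G`. -/
def ILTG (G : SimpleGraph V) : (t : ℕ) → SimpleGraph (ILTV V t)
  | 0 => G
  | t + 1 => ILTstep (ILTG G t)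

instance ILTVFintype [Fintype V] : ∀ t, Fintype (ILTV V t)
  | 0 => inferInstanceAs (Fintype V)
  | t + 1 => letI := ILTVFintype t
             inferInstanceAs (Fintype (ILTV V t ⊕ ILTV V t))

instance ILTVDecEq [DecidableEq V] : ∀ t, DecidableEq (ILTV V t)
  | 0 => inferInstanceAs (DecidableEq V)
  | t + 1 => letI := ILTVDecEq t
             inferInstanceAs (DecidableEq (ILTV V t ⊕ ILTV V t))

instance ILTGDecAdj (G : SimpleGraph V) [DecidableEq V] [DecidableRel G.Adj] :
    ∀ t, DecidableRel (ILTG G t).Adj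
  | 0 => inferInstanceAs (DecidableRel G.Adj)
  | t + 1 => letI : DecidableEq (ILTV V t) := ILTVDecEq t
             letI : DecidableRel (ILTG G t).Adj := ILTGDecAdj G t
             ILTstepDecAdj (ILTG G t)

/-- The volume of a graph: the sum of the degrees of its vertices. -/
def graphVol [Fintype V] (G : SimpleGraph V) [DecidableRel G.Adj] : ℕ :=
  ∑ v, G.degree v

/-- The Wiener index: the sum of distances over unordered pairs of vertices. -/
noncomputable def wienerIndex [Fintype V] (G : SimpleGraph V) : ℕ :=
  (∑ x : V, ∑ y : V, G.dist x y) / 2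

/-- The number of edges of `G` with both endpoints in the neighbour set of `x`. -/
noncomputable def nbrEdges [Fintype V] (G : SimpleGraph V) (x : V) : ℕ :=
  {e ∈ G.edgeSet | ∀ v ∈ e, G.Adj x v}.ncard

/-! In `ILTstep G` the neighbourhood of an old vertex `x` is `N(x)`, the clones of `N(x)` and
the clone `x'`. The clones are pairwise non-adjacent, and `y ∈ N(x)` is adjacent to the clone of
`z ∈ N[x]` iff `y = z` or `y ~ z`; so besides the `e` edges inside `N(x)` there are `2e + 2 deg x`
old–clone edges: `yz'` and `zy'` for each edge `yz`, and `yy'`, `yx'` for each `y ∈ N(x)`.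
The clone `x'` has neighbourhood `N(x) ∪ {x}`, which spans `e + deg x` edges.
Edges are counted twice, as ordered pairs, by double sums of indicators. -/

lemma two_mul_ncard_edges_within [Fintype V] (G : SimpleGraph V) [DecidableRel G.Adj]
    (s : Set V) [DecidablePred (· ∈ s)] :
    2 * {e ∈ G.edgeSet | ∀ v ∈ e, v ∈ s}.ncard =
      ∑ y, ∑ z, if G.Adj y z ∧ y ∈ s ∧ z ∈ s then 1 else 0 := by
  classical
  set H := (G.induce s).spanningCoe
  have hH : ∀ y z, H.Adj y z ↔ G.Adj y z ∧ y ∈ s ∧ z ∈ s := by simp [H]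
  have hedges : {e ∈ G.edgeSet | ∀ v ∈ e, v ∈ s} = H.edgeSet := by
    ext e
    induction e using Sym2.ind with
    | _ y z => simp [hH]
  rw [hedges, ← coe_edgeFinset, Set.ncard_coe_finset, ← sum_degrees_eq_twice_card_edges]
  refine sum_congr rfl fun y _ => ?_
  rw [← Nat.cast_id (H.degree y), degree_eq_sum_if_adj]
  simp only [hH]

lemma two_mul_nbrEdges [Fintype V] (G : SimpleGraph V) [DecidableRel G.Adj] (x : V) :
    2 * nbrEdges G x = ∑ y, ∑ z, if G.Adj y z ∧ G.Adj x y ∧ G.Adj x z then 1 else 0 :=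
  two_mul_ncard_edges_within G {v | G.Adj x v}

@[simp] lemma ILTstep_adj_inl_inl (G : SimpleGraph V) (x y : V) :
    (ILTstep G).Adj (.inl x) (.inl y) ↔ G.Adj x y := .rfl

@[simp] lemma ILTstep_adj_inl_inr (G : SimpleGraph V) (x y : V) :
    (ILTstep G).Adj (.inl x) (.inr y) ↔ x = y ∨ G.Adj x y := .rfl

@[simp] lemma ILTstep_adj_inr_inl (G : SimpleGraph V) (x y : V) :
    (ILTstep G).Adj (.inr x) (.inl y) ↔ x = y ∨ G.Adj x y := .rfl

@[simp] lemma not_ILTstep_adj_inr_inr (G : SimpleGraph V) (x y : V) :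
    ¬(ILTstep G).Adj (.inr x) (.inr y) := id

section Counting

variable [Fintype V] (G : SimpleGraph V) [DecidableRel G.Adj] (x : V)

lemma sum_sum_ite_adj_closedNbhd [DecidableEq V] :
    (∑ y, ∑ z, if G.Adj y z ∧ (x = y ∨ G.Adj x y) ∧ (x = z ∨ G.Adj x z) then 1 else 0) =
      2 * nbrEdges G x + 2 * G.degree x := by
  have indicator_split : ∀ y z,
      (if G.Adj y z ∧ (x = y ∨ G.Adj x y) ∧ (x = z ∨ G.Adj x z) then 1 else 0) =
        (if G.Adj y z ∧ G.Adj x y ∧ G.Adj x z then 1 else 0) +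
          (if x = y ∧ G.Adj x z then 1 else 0) + (if x = z ∧ G.Adj x y then 1 else 0) := by
    intro y z
    grind [SimpleGraph.irrefl, SimpleGraph.adj_comm]
  simp only [indicator_split, sum_add_distrib]
  rw [← two_mul_nbrEdges]
  simp only [ite_and, sum_ite_irrel, sum_const_zero, sum_ite_eq, mem_univ, if_true, sum_boole,
    ← neighborFinset_eq_filter, card_neighborFinset_eq_degree, Nat.cast_id]
  ring

lemma sum_sum_ite_adj_clone [DecidableEq V] :
    (∑ y, ∑ z, if (y = z ∨ G.Adj y z) ∧ G.Adj x y ∧ (x = z ∨ G.Adj x z) then 1 else 0) =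
      2 * nbrEdges G x + 2 * G.degree x := by
  have indicator_split : ∀ y z,
      (if (y = z ∨ G.Adj y z) ∧ G.Adj x y ∧ (x = z ∨ G.Adj x z) then 1 else 0) =
        (if G.Adj y z ∧ G.Adj x y ∧ G.Adj x z then 1 else 0) +
          (if y = z ∧ G.Adj x y then 1 else 0) + (if x = z ∧ G.Adj x y then 1 else 0) := by
    intro y z
    grind [SimpleGraph.irrefl, SimpleGraph.adj_comm]
  simp only [indicator_split, sum_add_distrib]
  rw [← two_mul_nbrEdges]
  simp only [ite_and, sum_ite_eq, mem_univ, if_true, sum_boole, ← neighborFinset_eq_filter,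
    card_neighborFinset_eq_degree, Nat.cast_id]
  ring

lemma nbrEdges_ILTstep_inl :
    nbrEdges (ILTstep G) (.inl x) = 3 * nbrEdges G x + 2 * G.degree x := by
  classical
  have h := two_mul_nbrEdges (ILTstep G) (.inl x)
  simp only [Fintype.sum_sum_type, ILTstep_adj_inl_inl, ILTstep_adj_inl_inr,
    ILTstep_adj_inr_inl, not_ILTstep_adj_inr_inr, false_and, if_false, sum_const_zero,
    add_zero, sum_add_distrib] at h
  have clone_old : (∑ y, ∑ z,
      if (y = z ∨ G.Adj y z) ∧ (x = y ∨ G.Adj x y) ∧ G.Adj x z then 1 else 0) =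
        ∑ y, ∑ z, if (y = z ∨ G.Adj y z) ∧ G.Adj x y ∧ (x = z ∨ G.Adj x z) then 1 else 0 := by
    rw [sum_comm]
    refine sum_congr rfl fun y _ => sum_congr rfl fun z _ => if_congr ?_ rfl rfl
    rw [eq_comm, G.adj_comm z y]
    tauto
  rw [clone_old, sum_sum_ite_adj_clone, ← two_mul_nbrEdges] at h
  omega

lemma nbrEdges_ILTstep_inr : nbrEdges (ILTstep G) (.inr x) = nbrEdges G x + G.degree x := by
  classical
  have h := two_mul_nbrEdges (ILTstep G) (.inr x)
  simp only [Fintype.sum_sum_type, ILTstep_adj_inl_inl, ILTstep_adj_inr_inl,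
    not_ILTstep_adj_inr_inr, false_and, and_false, if_false, sum_const_zero, add_zero] at h
  rw [sum_sum_ite_adj_closedNbhd] at h
  omega

end Counting

theorem ILT_nbrEdges_recurrence_general [Fintype V]
    (G : SimpleGraph V) [DecidableRel G.Adj] (x : V) :
    nbrEdges (ILTstep G) (Sum.inl x) = 3 * nbrEdges G x + 2 * G.degree x ∧
    nbrEdges (ILTstep G) (Sum.inr x) = nbrEdges G x + G.degree x :=
  ⟨nbrEdges_ILTstep_inl G x, nbrEdges_ILTstep_inr G x⟩

theorem ILT_nbrEdges_recurrence [Fintype V] [DecidableEq V]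
    (G : SimpleGraph V) [DecidableRel G.Adj] (x : V) :
    nbrEdges (ILTstep G) (Sum.inl x) = 3 * nbrEdges G x + 2 * G.degree x ∧
    nbrEdges (ILTstep G) (Sum.inr x) = nbrEdges G x + G.degree x :=
  ILT_nbrEdges_recurrence_general G x
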